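/- arXiv:1112.4555 — 3 statements merged into one kernel-verified Lean document; each statement's English description precedes it below -/
import Mathlib

section
/- Let k be a field, G a group, and V a finite-dimensional kG-module. If x, y, z are elements of G with xyz = 1 and the subgroup H = ⟨x, y⟩ satisfies C_V(H) = 0 and C_{V*}(H) = 0 (no nonzero fixed vectors on V or its dual), then dim C_V(x) + dim C_V(y) + dim C_V(z) ≤ dim V. -/
/-!
Write `a = ρ x`, `b = ρ y`, `c = ρ z`, so `a * b * c = 1`, and consider
`T : V × V × V → V`, `T (u, v, w) = (a - 1) u + a (b - 1) v + a b (c - 1) w`.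
The image of `T` contains `range (a - 1) ⊔ range (b - 1)`, which is all of `V` because a
functional killing both ranges is fixed by `a` and `b` on the dual; hence `dim ker T = 2 dim V`.
The kernel of `T` contains the diagonal, on which the three terms telescope to `(a b c - 1) v = 0`,
and the product of the three fixed spaces; these meet trivially since a vector fixed by `a` and
`b` is zero. Counting dimensions gives the inequality.
-/

open Module LinearMap

namespace Representation

variable {k G V : Type*} [CommSemiring k] [Group G] [AddCommMonoid V] [Module k V]

theorem apply_eq_self_of_mem_closure (ρ : Representation k G V) {s : Set G} {v : V}
    (hs : ∀ g ∈ s, ρ g v = v) {h : G} (hh : h ∈ Subgroup.closure s) : ρ h v = v := by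
  have := (Subgroup.closure_le ((MulAction.stabilizer _ v).comap ρ.asGroupHom)).2 hs hh
  rwa [Subgroup.mem_comap, MulAction.mem_stabilizer_iff, Units.smul_def, asGroupHom_apply] at this

theorem dual_apply_eq_self_iff (ρ : Representation k G V) (g : G) (φ : Dual k V) :
    ρ.dual g φ = φ ↔ φ ∘ₗ ρ g = φ := by
  have comp_inv (h : G) (ψ : Dual k V) : (ψ ∘ₗ ρ h⁻¹) ∘ₗ ρ h = ψ := by
    rw [comp_assoc, ← Module.End.mul_eq_comp, ← map_mul, inv_mul_cancel, map_one,
      Module.End.one_eq_id, comp_id]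
  rw [dual_apply, Dual.transpose_apply]
  constructor <;> intro h
  · nth_rw 1 [← h]; exact comp_inv g φ
  · nth_rw 1 [← h]; simpa only [inv_inv] using comp_inv g⁻¹ φ

end Representation

namespace LinearMap

theorem sup_range_eq_top_of_dual {K V : Type*} [Field K] [AddCommGroup V] [Module K V]
    {f g : V →ₗ[K] V} (h : ∀ φ : Dual K V, φ ∘ₗ f = 0 → φ ∘ₗ g = 0 → φ = 0) :
    range f ⊔ range g = ⊤ := by
  rw [← Submodule.dualAnnihilator_eq_bot_iff, Submodule.dualAnnihilator_sup_eq, eq_bot_iff]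
  rintro φ ⟨hf, hg⟩
  rw [SetLike.mem_coe, Submodule.mem_dualAnnihilator] at hf hg
  exact h φ (ext fun v ↦ hf _ (mem_range_self f v)) (ext fun v ↦ hg _ (mem_range_self g v))

variable {K V : Type*} [DivisionRing K] [AddCommGroup V] [Module K V]

def scottMap (a b c : Module.End K V) : V × V × V →ₗ[K] V :=
  (a - 1).coprod ((a * (b - 1)).coprod (a * b * (c - 1)))

theorem scottMap_apply (a b c : Module.End K V) (u v w : V) :
    scottMap a b c (u, v, w) = (a - 1) u + (a * (b - 1)) v + (a * b * (c - 1)) w := by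
  simp [scottMap, add_assoc]

theorem range_sub_one_sup_le_range_scottMap (a b c : Module.End K V) :
    range (a - 1) ⊔ range (b - 1) ≤ range (scottMap a b c) := by
  rw [sup_le_iff]
  constructor <;> rintro _ ⟨v, rfl⟩
  · exact ⟨(v, 0, 0), by simp [scottMap_apply]⟩
  · have hb : (a - 1) * -(b - 1) + a * (b - 1) = b - 1 := by noncomm_ring
    exact ⟨(-(b - 1) v, v, 0), by simpa [scottMap_apply] using congr($hb v)⟩

theorem scottMap_apply_diag (a b c : Module.End K V) (v : V) :
    scottMap a b c (v, v, v) = (a * b * c - 1) v := by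
  rw [scottMap_apply, ← add_apply, ← add_apply]
  congr 1
  noncomm_ring

def fixedAddDiag (a b c : Module.End K V) :
    (ker (a - 1) × ker (b - 1) × ker (c - 1)) × V →ₗ[K] V × V × V :=
  ((ker (a - 1)).subtype.prodMap ((ker (b - 1)).subtype.prodMap (ker (c - 1)).subtype)).coprod
    (id.prod (id.prod id))

theorem fixedAddDiag_apply (a b c : Module.End K V) (p : ker (a - 1)) (q : ker (b - 1))
    (r : ker (c - 1)) (v : V) :
    fixedAddDiag a b c ((p, q, r), v) = (p + v, q + v, r + v) := rfl

theorem range_fixedAddDiag_le_ker_scottMap {a b c : Module.End K V} (habc : a * b * c = 1) :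
    range (fixedAddDiag a b c) ≤ ker (scottMap a b c) := by
  rintro _ ⟨⟨⟨p, q, r⟩, v⟩, rfl⟩
  have hfix : scottMap a b c (p, q, r) = 0 := by
    simp [scottMap_apply, Module.End.mul_apply, mem_ker.1 p.2, mem_ker.1 q.2, mem_ker.1 r.2]
  rw [mem_ker, fixedAddDiag_apply, ← Prod.mk_add_mk, ← Prod.mk_add_mk, map_add, hfix,
    scottMap_apply_diag, habc, sub_self, zero_apply, zero_add]

theorem fixedAddDiag_injective {a b c : Module.End K V} (hab : ker (a - 1) ⊓ ker (b - 1) = ⊥) :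
    Function.Injective (fixedAddDiag a b c) := by
  rw [← ker_eq_bot, Submodule.eq_bot_iff]
  rintro ⟨⟨p, q, r⟩, v⟩ h
  simp only [mem_ker, fixedAddDiag_apply, Prod.mk_eq_zero, add_eq_zero_iff_neg_eq] at h
  obtain ⟨hp, hq, hr⟩ := h
  have hv : v = 0 := by
    rw [← Submodule.mem_bot K, ← hab]
    exact ⟨hp ▸ neg_mem p.2, hq ▸ neg_mem q.2⟩
  subst hv
  simp_all

theorem finrank_ker_sub_one_add_le_of_mul_eq_one [FiniteDimensional K V]
    {a b c : Module.End K V} (habc : a * b * c = 1)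
    (hker : ker (a - 1) ⊓ ker (b - 1) = ⊥) (hrange : range (a - 1) ⊔ range (b - 1) = ⊤) :
    finrank K (ker (a - 1)) + finrank K (ker (b - 1)) + finrank K (ker (c - 1)) ≤
      finrank K V := by
  have hsurj : range (scottMap a b c) = ⊤ :=
    top_le_iff.1 (hrange ▸ range_sub_one_sup_le_range_scottMap a b c)
  have hrank := finrank_range_add_finrank_ker (scottMap a b c)
  have hemb : finrank K ((ker (a - 1) × ker (b - 1) × ker (c - 1)) × V) ≤
      finrank K (ker (scottMap a b c)) :=
    (finrank_range_of_inj (fixedAddDiag_injective hker)).symm.trans_le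
      (Submodule.finrank_mono (range_fixedAddDiag_le_ker_scottMap habc))
  rw [hsurj, finrank_top] at hrank
  simp only [finrank_prod] at hrank hemb
  omega

end LinearMap

/-- Scott's Lemma for a triple with product 1: if `x * y * z = 1` and the subgroup
generated by `x` and `y` has no nonzero fixed vectors on `V` nor on its dual, then the
dimensions of the fixed spaces of `x`, `y`, `z` sum to at most `dim V`. -/
theorem scott_lemma_triple {k G V : Type*} [Field k] [Group G]
    [AddCommGroup V] [Module k V] [FiniteDimensional k V]
    (ρ : Representation k G V) (x y z : G) (hxyz : x * y * z = 1)
    (hV : ∀ v : V, (∀ h ∈ Subgroup.closure ({x, y} : Set G), ρ h v = v) → v = 0)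
    (hVdual : ∀ f : Module.Dual k V,
      (∀ h ∈ Subgroup.closure ({x, y} : Set G), ρ.dual h f = f) → f = 0) :
    finrank k (LinearMap.ker (ρ x - 1)) + finrank k (LinearMap.ker (ρ y - 1)) +
      finrank k (LinearMap.ker (ρ z - 1)) ≤ finrank k V := by
  refine finrank_ker_sub_one_add_le_of_mul_eq_one (by rw [← map_mul, ← map_mul, hxyz, map_one])
    ?_ ?_
  · refine (Submodule.eq_bot_iff _).2 fun v hv ↦ hV v fun h ↦ ρ.apply_eq_self_of_mem_closure ?_
    simp only [Submodule.mem_inf, mem_ker, LinearMap.sub_apply, Module.End.one_apply,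
      sub_eq_zero] at hv
    simpa only [Set.mem_insert_iff, Set.mem_singleton_iff, forall_eq_or_imp, forall_eq] using hv
  · refine sup_range_eq_top_of_dual fun φ hx hy ↦
      hVdual φ fun h ↦ ρ.dual.apply_eq_self_of_mem_closure ?_
    rw [comp_sub, Module.End.one_eq_id, comp_id, sub_eq_zero] at hx hy
    simp only [Set.mem_insert_iff, Set.mem_singleton_iff, forall_eq_or_imp, forall_eq,
      Representation.dual_apply_eq_self_iff]
    exact ⟨hx, hy⟩
end

section
/- Let k be an algebraically closed field of characteristic p > 0 and let G = SL_p(k) act by conjugation on W = End(k^p). Then for every semisimple g ∈ G, dim C_W(g) ≥ p, and consequently for the irreducible composition factor V of W of dimension p^2 − 2, every element g ∈ G satisfies dim C_V(g) ≥ p − 2. -/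
/-!
Let `f` be an endomorphism of an `n`-dimensional `k`-vector space `V`. By the structure theorem
over the principal ideal domain `k[X]`, the `k[X]`-module `V` (with `X` acting as `f`) is
isomorphic to a commutative ring `S = ∏ᵢ k[X] ⧸ (qᵢ)`; transporting multiplication by elements
of `S` gives an `n`-dimensional space of endomorphisms commuting with `f`. Hence the fixed points
of conjugation by any `g ∈ SL_p(k)` on `W = End(k^p)` form a space of dimension at least `p`.
A subquotient `V` of codimension `2` in `W` loses at most `2` dimensions of fixed points.
-/

open Module

/-- The conjugation representation of `SL_p(k)` on `W = End(k^p)`, i.e. on `p × p`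
matrices, by `g • m = g * m * g⁻¹`. -/
noncomputable def conjRep (k : Type*) [Field k] (p : ℕ) :
    Representation k (Matrix.SpecialLinearGroup (Fin p) k) (Matrix (Fin p) (Fin p) k) where
  toFun g := (LinearMap.mulLeft k ((g : Matrix (Fin p) (Fin p) k))).comp
    (LinearMap.mulRight k (((g⁻¹ : Matrix.SpecialLinearGroup (Fin p) k) :
      Matrix (Fin p) (Fin p) k)))
  map_one' := by
    ext m
    simp
  map_mul' g h := by
    ext m
    simp [mul_assoc]

open Polynomial

section Centralizer

variable {k V : Type*} [Field k] [AddCommGroup V] [Module k V] [FiniteDimensional k V]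

theorem Module.End.finrank_le_finrank_centralizer_of_linearEquiv {S : Type*} [CommRing S]
    [Algebra k[X] S] [Algebra k S] [IsScalarTower k k[X] S] {f : Module.End k V}
    (ψ : AEval' f ≃ₗ[k[X]] S) :
    finrank k V ≤ finrank k (Subalgebra.centralizer k {f}) := by
  let T : S →ₗ[k] Module.End k V :=
    { toFun s := (AEval'.of f).symm.toLinearMap ∘ₗ
        ((ψ.symm.toLinearMap ∘ₗ LinearMap.mulLeft k[X] s ∘ₗ ψ.toLinearMap).restrictScalars k) ∘ₗ
        (AEval'.of f).toLinearMap
      map_add' s t := by ext; simp [add_mul]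
      map_smul' c s := by
        ext
        simp only [LinearMap.smul_apply, LinearMap.comp_apply, LinearMap.restrictScalars_apply,
          LinearEquiv.coe_coe, LinearMap.mulLeft_apply, smul_mul_assoc, RingHom.id_apply]
        rw [← algebraMap_smul k[X] c, map_smul, algebraMap_smul, map_smul] }
  -- `T s` is `k[X]`-linear on `AEval' f`, i.e. commutes with the action of `X`, which is `f`.
  have hT : ∀ s, T s ∈ (Subalgebra.centralizer k {f}).toSubmodule := by
    intro s
    rw [Subalgebra.mem_toSubmodule, Subalgebra.mem_centralizer_iff]
    rintro _ rfl
    ext v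
    simp [T, ← AEval'.X_smul_of]
  have hT_injective : Function.Injective (T.codRestrict _ hT) := by
    rw [← LinearMap.ker_eq_bot, eq_bot_iff]
    intro s hs
    have := congrArg (fun g : Subalgebra.centralizer k {f} =>
      (g : Module.End k V) ((AEval'.of f).symm (ψ.symm 1))) hs
    simpa [T] using this
  calc finrank k V = finrank k S := ((AEval'.of f).trans (ψ.restrictScalars k)).finrank_eq
    _ ≤ _ := LinearMap.finrank_le_finrank_of_injective hT_injective

theorem Module.End.finrank_le_finrank_centralizer (f : Module.End k V) :
    finrank k V ≤ finrank k (Subalgebra.centralizer k {f}) := by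
  obtain ⟨ι, _, q, -, n, ⟨φ⟩⟩ :=
    Module.equiv_directSum_of_isTorsion (Module.AEval.isTorsion_of_finiteDimensional k V f)
  exact finrank_le_finrank_centralizer_of_linearEquiv
    (φ.trans (DirectSum.linearEquivFunOnFintype k[X] ι _))

end Centralizer

theorem AlgEquiv.finrank_centralizer_apply {R A B : Type*} [CommRing R] [Ring A] [Ring B]
    [Algebra R A] [Algebra R B] (e : A ≃ₐ[R] B) (a : A) :
    finrank R (Subalgebra.centralizer R {e a}) = finrank R (Subalgebra.centralizer R {a}) := by
  have h : (Subalgebra.centralizer R {a}).map e.toAlgHom = Subalgebra.centralizer R {e a} := by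
    ext b
    obtain ⟨b, rfl⟩ := e.surjective b
    simp [Subalgebra.mem_centralizer_iff, ← map_mul]
  rw [← h]
  exact (Subalgebra.equivMapOfInjective _ _ e.injective).toLinearEquiv.finrank_eq.symm

theorem Matrix.card_le_finrank_centralizer {n k : Type*} [Fintype n] [DecidableEq n] [Field k]
    (A : Matrix n n k) :
    Fintype.card n ≤ finrank k (Subalgebra.centralizer k {A}) := by
  rw [← Matrix.toLinAlgEquiv'.finrank_centralizer_apply, ← Module.finrank_fintype_fun_eq_card k]
  exact Module.End.finrank_le_finrank_centralizer _

section Subquotient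

variable {k M N : Type*} [Field k] [AddCommGroup M] [Module k M] [AddCommGroup N] [Module k N]
  [FiniteDimensional k M]

theorem LinearMap.finrank_map_add_finrank_ker_inf (f : M →ₗ[k] N) (q : Submodule k M) :
    finrank k (q.map f) + finrank k ↥(LinearMap.ker f ⊓ q) = finrank k q := by
  have h := LinearMap.finrank_range_add_finrank_ker (f.domRestrict q)
  rwa [LinearMap.range_domRestrict, LinearMap.ker_domRestrict,
    ← inf_top_eq (LinearMap.ker f |>.comap _), ← Submodule.comap_subtype_self q,
    ← Submodule.comap_inf, (Submodule.comapSubtypeEquivOfLe inf_le_right).finrank_eq] at h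

theorem LinearMap.finrank_add_finrank_le_finrank_map_inf_add {f : M →ₗ[k] N}
    {M₂ : Submodule k M} (hf : M₂.map f = ⊤) (K : Submodule k M) :
    finrank k K + finrank k N ≤ finrank k ((K ⊓ M₂).map f) + finrank k M := by
  have hM₂ := f.finrank_map_add_finrank_ker_inf M₂
  rw [hf, finrank_top] at hM₂
  have hK₂ := f.finrank_map_add_finrank_ker_inf (K ⊓ M₂)
  have hker : finrank k ↥(LinearMap.ker f ⊓ (K ⊓ M₂)) ≤ finrank k ↥(LinearMap.ker f ⊓ M₂) :=
    Submodule.finrank_mono (inf_le_inf_left _ inf_le_right)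
  have hsup := Submodule.finrank_sup_add_finrank_inf_eq K M₂
  have hsup_le := Submodule.finrank_le (K ⊔ M₂)
  omega

end Subquotient

theorem ker_conjRep_sub_one {k : Type*} [Field k] {p : ℕ}
    (g : Matrix.SpecialLinearGroup (Fin p) k) :
    LinearMap.ker (conjRep k p g - 1) =
      Subalgebra.toSubmodule (Subalgebra.centralizer k {(g : Matrix (Fin p) (Fin p) k)}) := by
  set A : Matrix (Fin p) (Fin p) k := ↑g
  set B : Matrix (Fin p) (Fin p) k := ↑g⁻¹
  have hAB : A * B = 1 := by simp [A, B, Matrix.mul_adjugate]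
  have hBA : B * A = 1 := by simp [A, B, Matrix.adjugate_mul]
  ext m
  simp only [LinearMap.mem_ker, LinearMap.sub_apply, Module.End.one_apply, sub_eq_zero,
    Subalgebra.mem_toSubmodule, Subalgebra.mem_centralizer_iff, Set.mem_singleton_iff, forall_eq]
  change A * (m * B) = m ↔ A * m = m * A
  constructor
  · intro h
    calc A * m = A * (m * B) * A := by rw [mul_assoc, mul_assoc, hBA, mul_one]
      _ = m * A := by rw [h]
  · intro h
    rw [← mul_assoc, h, mul_assoc, hAB, mul_one]

theorem conjugation_fixed_space_bound_general {p : ℕ}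
    {k : Type*} [Field k]
    (V : Type*) [AddCommGroup V] [Module k V] [FiniteDimensional k V]
    (ρV : Representation k (Matrix.SpecialLinearGroup (Fin p) k) V)
    (hVdim : finrank k V = p ^ 2 - 2)
    (W₂ : Submodule k (Matrix (Fin p) (Fin p) k))
    (f : Matrix (Fin p) (Fin p) k →ₗ[k] V)
    (hfsurj : Submodule.map f W₂ = ⊤)
    (hfequiv : ∀ g, ∀ m ∈ W₂, f (conjRep k p g m) = ρV g (f m)) :
    (∀ g : Matrix.SpecialLinearGroup (Fin p) k,
      Module.End.IsSemisimple (Matrix.toLin' ((g : Matrix (Fin p) (Fin p) k))) →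
      p ≤ finrank k (LinearMap.ker (conjRep k p g - 1))) ∧
    (∀ g : Matrix.SpecialLinearGroup (Fin p) k,
      p - 2 ≤ finrank k (LinearMap.ker (ρV g - 1))) := by
  have hW : ∀ g : Matrix.SpecialLinearGroup (Fin p) k,
      p ≤ finrank k (LinearMap.ker (conjRep k p g - 1)) := fun g => by
    rw [ker_conjRep_sub_one, Subalgebra.finrank_toSubmodule]
    simpa only [Fintype.card_fin] using Matrix.card_le_finrank_centralizer (g : Matrix (Fin p) (Fin p) k)
  refine ⟨fun g _ => hW g, fun g => ?_⟩
  have hfixed : (LinearMap.ker (conjRep k p g - 1) ⊓ W₂).map f ≤ LinearMap.ker (ρV g - 1) := by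
    rintro _ ⟨m, ⟨hm, hmW₂⟩, rfl⟩
    simp only [SetLike.mem_coe, LinearMap.mem_ker, LinearMap.sub_apply, Module.End.one_apply,
      sub_eq_zero] at hm ⊢
    rw [← hfequiv g m hmW₂, hm]
  have hquot :=
    f.finrank_add_finrank_le_finrank_map_inf_add hfsurj (LinearMap.ker (conjRep k p g - 1))
  have hdimW : finrank k (Matrix (Fin p) (Fin p) k) = p ^ 2 := by simp [Module.finrank_matrix, sq]
  have hfixed_dim := Submodule.finrank_mono hfixed
  have hWg := hW g
  have hp_le : p ≤ p ^ 2 := Nat.le_self_pow two_ne_zero p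
  omega

/-- For `G = SL_p(k)` (`char k = p > 0`) acting by conjugation on `W = End(k^p)`:
every semisimple `g` has `dim C_W(g) ≥ p`, and for any irreducible composition factor
`V` of `W` of dimension `p² - 2` (presented as an equivariant quotient of an invariant
submodule), every `g` satisfies `dim C_V(g) ≥ p - 2`. -/
theorem conjugation_fixed_space_bound {p : ℕ} (hp : p.Prime)
    {k : Type*} [Field k] [IsAlgClosed k] (hchar : ringChar k = p)
    (V : Type*) [AddCommGroup V] [Module k V] [FiniteDimensional k V]
    (ρV : Representation k (Matrix.SpecialLinearGroup (Fin p) k) V)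
    (hVdim : finrank k V = p ^ 2 - 2)
    (hVirr : ∀ X : Submodule k V, (∀ g v, v ∈ X → ρV g v ∈ X) → X = ⊥ ∨ X = ⊤)
    (W₂ : Submodule k (Matrix (Fin p) (Fin p) k))
    (hW₂ : ∀ g, ∀ m ∈ W₂, conjRep k p g m ∈ W₂)
    (f : Matrix (Fin p) (Fin p) k →ₗ[k] V)
    (hfsurj : Submodule.map f W₂ = ⊤)
    (hfequiv : ∀ g, ∀ m ∈ W₂, f (conjRep k p g m) = ρV g (f m)) :
    (∀ g : Matrix.SpecialLinearGroup (Fin p) k,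
      Module.End.IsSemisimple (Matrix.toLin' ((g : Matrix (Fin p) (Fin p) k))) →
      p ≤ finrank k (LinearMap.ker (conjRep k p g - 1))) ∧
    (∀ g : Matrix.SpecialLinearGroup (Fin p) k,
      p - 2 ≤ finrank k (LinearMap.ker (ρV g - 1))) :=
  conjugation_fixed_space_bound_general V ρV hVdim W₂ f hfsurj hfequiv
end

section
/- Let k be an algebraically closed field of characteristic p, and let G be a finite group with a faithful irreducible kG-module V such that some minimal normal subgroup N of G is an elementary abelian 2-group. Then p ≠ 2 and there exists an involution g ∈ N with dim C_V(g) < (1/2)·dim V. -/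
open Module

section Aux

variable {k V H : Type*} [Field k] [AddCommGroup V] [Module k V] [Group H]

lemma mem_ker_sub_one' {f : V →ₗ[k] V} {v : V} :
    v ∈ LinearMap.ker (f - 1) ↔ f v = v := by
  rw [LinearMap.mem_ker, LinearMap.sub_apply, Module.End.one_apply, sub_eq_zero]

lemma mem_ker_add_one' {f : V →ₗ[k] V} {v : V} :
    v ∈ LinearMap.ker (f + 1) ↔ f v = -v := by
  rw [LinearMap.mem_ker, LinearMap.add_apply, Module.End.one_apply, add_eq_zero_iff_eq_neg]

lemma split_sup' (h2 : (2:k) ≠ 0) (f : V →ₗ[k] V) (hf : f * f = 1)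
    (W : Submodule k V) (hW : ∀ v ∈ W, f v ∈ W) :
    (W ⊓ LinearMap.ker (f - 1)) ⊔ (W ⊓ LinearMap.ker (f + 1)) = W := by
  have hff : ∀ v : V, f (f v) = v := fun v => by
    rw [← Module.End.mul_apply, hf, Module.End.one_apply]
  apply le_antisymm (sup_le inf_le_left inf_le_left)
  intro w hw
  have ha : (2:k)⁻¹ • (w + f w) ∈ W ⊓ LinearMap.ker (f - 1) := by
    refine Submodule.mem_inf.mpr ⟨Submodule.smul_mem _ _ (Submodule.add_mem _ hw (hW w hw)), ?_⟩
    rw [mem_ker_sub_one', map_smul, map_add, hff]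
    rw [add_comm (f w) w]
  have hb : (2:k)⁻¹ • (w - f w) ∈ W ⊓ LinearMap.ker (f + 1) := by
    refine Submodule.mem_inf.mpr ⟨Submodule.smul_mem _ _ (Submodule.sub_mem _ hw (hW w hw)), ?_⟩
    rw [mem_ker_add_one', map_smul, map_sub, hff, ← smul_neg, neg_sub]
  have key : (2:k)⁻¹ • (w + f w) + (2:k)⁻¹ • (w - f w) = w := by
    rw [← smul_add]
    have : w + f w + (w - f w) = (2:k) • w := by
      rw [two_smul]; abel
    rw [this, smul_smul, inv_mul_cancel₀ h2, one_smul]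
  have := Submodule.add_mem_sup ha hb
  rwa [key] at this

lemma split_rank' [FiniteDimensional k V] (h2 : (2:k) ≠ 0) (f : V →ₗ[k] V) (hf : f * f = 1)
    (W : Submodule k V) (hW : ∀ v ∈ W, f v ∈ W) :
    finrank k ↥(W ⊓ LinearMap.ker (f - 1)) + finrank k ↥(W ⊓ LinearMap.ker (f + 1))
      = finrank k ↥W := by
  have hinf : (W ⊓ LinearMap.ker (f - 1)) ⊓ (W ⊓ LinearMap.ker (f + 1)) = ⊥ := by
    rw [eq_bot_iff]
    intro v hv
    obtain ⟨hv1, hv2⟩ := Submodule.mem_inf.mp hv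
    have h1 := mem_ker_sub_one'.mp (Submodule.mem_inf.mp hv1).2
    have h3 := mem_ker_add_one'.mp (Submodule.mem_inf.mp hv2).2
    rw [h1] at h3
    have : (2:k) • v = 0 := by rw [two_smul]; exact add_eq_zero_iff_eq_neg.mpr h3
    rcases smul_eq_zero.mp this with h' | h'
    · exact absurd h' h2
    · simpa using h'
  have h := Submodule.finrank_sup_add_finrank_inf_eq
    (W ⊓ LinearMap.ker (f - 1)) (W ⊓ LinearMap.ker (f + 1))
  rw [split_sup' h2 f hf W hW, hinf, finrank_bot] at h
  omega

lemma exists_fixed' (σ : H →* (V →ₗ[k] V)) (hcomm : ∀ a b : H, a * b = b * a)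
    (hnil : ∀ a : H, (σ a - 1) * (σ a - 1) = 0) (S : Finset H) :
    ∀ (W : Submodule k V), W ≠ ⊥ → (∀ a : H, ∀ v ∈ W, σ a v ∈ W) →
      ∃ v ∈ W, v ≠ 0 ∧ ∀ a ∈ S, σ a v = v := by
  classical
  induction S using Finset.induction with
  | empty =>
    intro W hW _
    obtain ⟨v, hvW, hv0⟩ := W.ne_bot_iff.mp hW
    exact ⟨v, hvW, hv0, fun a ha => absurd ha (Finset.notMem_empty a)⟩
  | @insert a S haS IH =>
    intro W hW hinv
    set W' := W ⊓ LinearMap.ker (σ a - 1) with hW'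
    have hW'ne : W' ≠ ⊥ := by
      obtain ⟨w, hwW, hw0⟩ := W.ne_bot_iff.mp hW
      by_cases hfix : σ a w = w
      · exact W'.ne_bot_iff.mpr ⟨w, Submodule.mem_inf.mpr ⟨hwW, mem_ker_sub_one'.mpr hfix⟩, hw0⟩
      · refine W'.ne_bot_iff.mpr ⟨σ a w - w, Submodule.mem_inf.mpr
          ⟨Submodule.sub_mem _ (hinv a w hwW) hwW, ?_⟩, sub_ne_zero.mpr hfix⟩
        rw [LinearMap.mem_ker]
        have : ((σ a - 1) * (σ a - 1)) w = 0 := by rw [hnil a]; rfl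
        rw [Module.End.mul_apply] at this
        simpa [LinearMap.sub_apply] using this
    have hW'inv : ∀ b : H, ∀ v ∈ W', σ b v ∈ W' := by
      rintro b v hv
      obtain ⟨hvW, hvK⟩ := Submodule.mem_inf.mp hv
      rw [mem_ker_sub_one'] at hvK
      refine Submodule.mem_inf.mpr ⟨hinv b v hvW, mem_ker_sub_one'.mpr ?_⟩
      rw [← Module.End.mul_apply, ← map_mul, hcomm, map_mul, Module.End.mul_apply, hvK]
    obtain ⟨v, hvW', hv0, hfixS⟩ := IH W' hW'ne hW'inv
    obtain ⟨hvW, hvK⟩ := Submodule.mem_inf.mp hvW'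
    refine ⟨v, hvW, hv0, fun b hb => ?_⟩
    rcases Finset.mem_insert.mp hb with rfl | hb
    · exact mem_ker_sub_one'.mp hvK
    · exact hfixS b hb

lemma lemM [Fintype H] [FiniteDimensional k V] (σ : H →* (V →ₗ[k] V))
    (h2 : (2:k) ≠ 0) (hsq : ∀ a : H, a * a = 1) :
    ∀ (n : ℕ) (W : Submodule k V), finrank k ↥W ≤ n →
      (∀ a : H, ∀ v ∈ W, σ a v ∈ W) →
      (∀ v ∈ W, (∀ a : H, σ a v = v) → v = 0) →
      2 * ∑ a : H, finrank k ↥(W ⊓ LinearMap.ker (σ a - 1)) =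
        Fintype.card H * finrank k ↥W := by
  classical
  have hcomm : ∀ a b : H, a * b = b * a := by
    have hi : ∀ a : H, a⁻¹ = a := fun a => inv_eq_of_mul_eq_one_right (hsq a)
    intro a b
    calc a * b = ((a*b)⁻¹)⁻¹ := by rw [inv_inv]
    _ = (a*b)⁻¹ := by rw [hi]
    _ = b⁻¹ * a⁻¹ := by rw [mul_inv_rev]
    _ = b * a := by rw [hi, hi]
  have hσσ : ∀ a : H, σ a * σ a = 1 := fun a => by rw [← map_mul, hsq, map_one]
  intro n
  induction n with
  | zero =>
    intro W hWn _ _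
    have hWbot : W = ⊥ := Submodule.finrank_eq_zero.mp (Nat.le_zero.mp hWn)
    subst hWbot
    simp
  | succ n IH =>
    intro W hWn hinv hC
    by_cases hWbot : W = ⊥
    · subst hWbot; simp
    -- find h with W not ≤ ker (σ h - 1)
    obtain ⟨h, hh⟩ : ∃ h : H, ¬ W ≤ LinearMap.ker (σ h - 1) := by
      by_contra hcon
      push_neg at hcon
      apply hWbot
      rw [eq_bot_iff]
      intro w hw
      have : w = 0 := hC w hw (fun a => mem_ker_sub_one'.mp (hcon a hw))
      simp [this]
    set Wp := W ⊓ LinearMap.ker (σ h - 1) with hWp_def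
    set Wm := W ⊓ LinearMap.ker (σ h + 1) with hWm_def
    have hsup := split_sup' h2 (σ h) (hσσ h) W (hinv h)
    have hrank := split_rank' h2 (σ h) (hσσ h) W (hinv h)
    rw [← hWp_def, ← hWm_def] at hrank
    have hWm_ne : Wm ≠ ⊥ := by
      intro e
      rw [← hWp_def, ← hWm_def, e, sup_bot_eq] at hsup
      exact hh (hsup ▸ inf_le_right)
    by_cases hWpbot : Wp = ⊥
    · -- σ h acts as -1 on W
      have hWK : W ≤ LinearMap.ker (σ h + 1) := by
        rw [← hWp_def, ← hWm_def, hWpbot, bot_sup_eq] at hsup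
        exact hsup ▸ inf_le_right
      have hneg : ∀ w ∈ W, σ h w = -w := fun w hw => mem_ker_add_one'.mp (hWK hw)
      have key : ∀ a : H, W ⊓ LinearMap.ker (σ (a * h) - 1) = W ⊓ LinearMap.ker (σ a + 1) := by
        intro a
        ext v
        simp only [Submodule.mem_inf, mem_ker_sub_one', mem_ker_add_one']
        constructor
        · rintro ⟨hvW, hvk⟩
          refine ⟨hvW, ?_⟩
          rw [map_mul, Module.End.mul_apply, hneg v hvW, map_neg] at hvk
          exact neg_eq_iff_eq_neg.mp hvk
        · rintro ⟨hvW, hvk⟩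
          refine ⟨hvW, ?_⟩
          rw [map_mul, Module.End.mul_apply, hneg v hvW, map_neg, hvk, neg_neg]
      have hre : ∑ a : H, finrank k ↥(W ⊓ LinearMap.ker (σ (a * h) - 1))
          = ∑ a : H, finrank k ↥(W ⊓ LinearMap.ker (σ a - 1)) :=
        Fintype.sum_equiv (Equiv.mulRight h) _ _ (fun a => rfl)
      calc 2 * ∑ a : H, finrank k ↥(W ⊓ LinearMap.ker (σ a - 1))
          = ∑ a : H, finrank k ↥(W ⊓ LinearMap.ker (σ a - 1))
            + ∑ a : H, finrank k ↥(W ⊓ LinearMap.ker (σ (a * h) - 1)) := by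
            rw [hre]; ring
        _ = ∑ a : H, (finrank k ↥(W ⊓ LinearMap.ker (σ a - 1))
            + finrank k ↥(W ⊓ LinearMap.ker (σ (a * h) - 1))) := by
            rw [Finset.sum_add_distrib]
        _ = ∑ a : H, finrank k ↥W := by
            refine Finset.sum_congr rfl (fun a _ => ?_)
            rw [key a]
            exact split_rank' h2 (σ a) (hσσ a) W (hinv a)
        _ = Fintype.card H * finrank k ↥W := by
            rw [Finset.sum_const, Finset.card_univ, smul_eq_mul]
    · -- recurse on Wp and Wm
      have hinv_comm : ∀ (b a : H) (K : V →ₗ[k] V), (K = σ b - 1 ∨ K = σ b + 1) →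
          ∀ v ∈ W ⊓ LinearMap.ker K, σ a v ∈ W ⊓ LinearMap.ker K := by
        rintro b a K (rfl | rfl) v hv <;>
        · obtain ⟨hvW, hvK⟩ := Submodule.mem_inf.mp hv
          refine Submodule.mem_inf.mpr ⟨hinv a v hvW, ?_⟩
          first
          | (rw [mem_ker_sub_one'] at hvK ⊢
             rw [← Module.End.mul_apply, ← map_mul, hcomm, map_mul, Module.End.mul_apply, hvK])
          | (rw [mem_ker_add_one'] at hvK ⊢
             rw [← Module.End.mul_apply, ← map_mul, hcomm, map_mul, Module.End.mul_apply, hvK,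
               map_neg])
      have hWp_inv : ∀ a : H, ∀ v ∈ Wp, σ a v ∈ Wp :=
        fun a v hv => hinv_comm h a _ (Or.inl rfl) v hv
      have hWm_inv : ∀ a : H, ∀ v ∈ Wm, σ a v ∈ Wm :=
        fun a v hv => hinv_comm h a _ (Or.inr rfl) v hv
      have hWpC : ∀ v ∈ Wp, (∀ a : H, σ a v = v) → v = 0 :=
        fun v hv => hC v (Submodule.mem_inf.mp hv).1
      have hWmC : ∀ v ∈ Wm, (∀ a : H, σ a v = v) → v = 0 :=
        fun v hv => hC v (Submodule.mem_inf.mp hv).1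
      have hp_pos : finrank k ↥Wp ≠ 0 := fun e => hWpbot (Submodule.finrank_eq_zero.mp e)
      have hm_pos : finrank k ↥Wm ≠ 0 := fun e => hWm_ne (Submodule.finrank_eq_zero.mp e)
      have hple : finrank k ↥Wp ≤ n := by omega
      have hmle : finrank k ↥Wm ≤ n := by omega
      have IHp := IH Wp hple hWp_inv hWpC
      have IHm := IH Wm hmle hWm_inv hWmC
      have hsplit_a : ∀ a : H, finrank k ↥(W ⊓ LinearMap.ker (σ a - 1))
          = finrank k ↥(Wp ⊓ LinearMap.ker (σ a - 1))
            + finrank k ↥(Wm ⊓ LinearMap.ker (σ a - 1)) := by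
        intro a
        have hinvWK : ∀ v ∈ W ⊓ LinearMap.ker (σ a - 1), σ h v ∈ W ⊓ LinearMap.ker (σ a - 1) :=
          fun v hv => hinv_comm a h _ (Or.inl rfl) v hv
        have := split_rank' h2 (σ h) (hσσ h) (W ⊓ LinearMap.ker (σ a - 1)) hinvWK
        rw [inf_right_comm W (LinearMap.ker (σ a - 1)) (LinearMap.ker (σ h - 1)),
          inf_right_comm W (LinearMap.ker (σ a - 1)) (LinearMap.ker (σ h + 1))] at this
        exact this.symm
      calc 2 * ∑ a : H, finrank k ↥(W ⊓ LinearMap.ker (σ a - 1))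
          = 2 * ∑ a : H, finrank k ↥(Wp ⊓ LinearMap.ker (σ a - 1))
            + 2 * ∑ a : H, finrank k ↥(Wm ⊓ LinearMap.ker (σ a - 1)) := by
            simp only [hsplit_a, Finset.sum_add_distrib]; ring
        _ = Fintype.card H * finrank k ↥Wp + Fintype.card H * finrank k ↥Wm := by
            rw [IHp, IHm]
        _ = Fintype.card H * finrank k ↥W := by rw [← hrank]; ring

end Aux

/-- If a finite group `G` has a faithful irreducible module `V` over an algebraically
closed field `k` and a minimal normal subgroup `N` which is an elementary abelian
`2`-group, then `char k ≠ 2` and some involution `g ∈ N` has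
`dim C_V(g) < (1/2) dim V`. -/
theorem minimal_normal_two_group_involution {k G V : Type*} [Field k] [IsAlgClosed k]
    [Group G] [Finite G] [AddCommGroup V] [Module k V] [FiniteDimensional k V]
    [Nontrivial V]
    (ρ : Representation k G V) (hfaithful : Function.Injective ρ)
    (hirr : ∀ W : Submodule k V, (∀ g v, v ∈ W → ρ g v ∈ W) → W = ⊥ ∨ W = ⊤)
    (N : Subgroup G) [N.Normal] (hNbot : N ≠ ⊥)
    (hmin : ∀ M : Subgroup G, M.Normal → M ≤ N → M ≠ ⊥ → M = N)
    (helem : ∀ g ∈ N, g * g = 1) :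
    ringChar k ≠ 2 ∧
    ∃ g ∈ N, orderOf g = 2 ∧ 2 * finrank k (LinearMap.ker (ρ g - 1)) < finrank k V := by
  classical
  haveI : Fintype ↥N := Fintype.ofFinite _
  set σ : ↥N →* (V →ₗ[k] V) := ρ.comp N.subtype with hσ_def
  have hσ_app : ∀ a : ↥N, σ a = ρ (a : G) := fun a => rfl
  have hsqN : ∀ a : ↥N, a * a = 1 := fun a => Subtype.ext (helem _ a.2)
  have hσσ : ∀ a : ↥N, σ a * σ a = 1 := fun a => by rw [← map_mul, hsqN, map_one]
  have hcomm : ∀ a b : ↥N, a * b = b * a := by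
    have hi : ∀ a : ↥N, a⁻¹ = a := fun a => inv_eq_of_mul_eq_one_right (hsqN a)
    intro a b
    calc a * b = ((a*b)⁻¹)⁻¹ := by rw [inv_inv]
    _ = (a*b)⁻¹ := by rw [hi]
    _ = b⁻¹ * a⁻¹ := by rw [mul_inv_rev]
    _ = b * a := by rw [hi, hi]
  set C : Submodule k V := ⨅ a : ↥N, LinearMap.ker (σ a - 1) with hC_def
  have hmemC : ∀ v : V, v ∈ C ↔ ∀ a : ↥N, σ a v = v := by
    intro v
    rw [hC_def, Submodule.mem_iInf]
    exact forall_congr' (fun a => mem_ker_sub_one')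
  have hCinv : ∀ g v, v ∈ C → ρ g v ∈ C := by
    intro g v hv
    rw [hmemC] at hv ⊢
    intro a
    have hb : g⁻¹ * (a : G) * g ∈ N := by
      have := (inferInstance : N.Normal).conj_mem (a : G) a.2 g⁻¹
      simpa using this
    have hab : (a : G) * g = g * (g⁻¹ * (a : G) * g) := by group
    rw [hσ_app, ← Module.End.mul_apply, ← map_mul, hab, map_mul, Module.End.mul_apply]
    rw [show ρ (g⁻¹ * (a : G) * g) v = v from hv ⟨_, hb⟩]
  have hCne_top : C ≠ ⊤ := by
    intro ht
    apply hNbot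
    rw [Subgroup.eq_bot_iff_forall]
    intro x hx
    apply hfaithful
    rw [map_one]
    ext v
    have hv : v ∈ C := ht ▸ Submodule.mem_top
    rw [hmemC] at hv
    exact hv ⟨x, hx⟩
  have hCbot : C = ⊥ := (hirr C (fun g v hv => hCinv g v hv)).resolve_right hCne_top
  have h2 : (2:k) ≠ 0 := by
    intro h20
    have hnil : ∀ a : ↥N, (σ a - 1) * (σ a - 1) = 0 := by
      intro a
      have hx : σ a * σ a = 1 := hσσ a
      have expand : (σ a - 1) * (σ a - 1) = σ a * σ a - (σ a + σ a) + (1 + 1) - 1 := by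
        noncomm_ring
      rw [expand, hx]
      have e1 : σ a + σ a = (2:k) • σ a := (two_smul k (σ a)).symm
      have e2 : (1 : V →ₗ[k] V) + 1 = (2:k) • (1 : V →ₗ[k] V) := (two_smul k _).symm
      rw [e1, e2, h20, zero_smul, zero_smul]
      simp
    obtain ⟨v, -, hv0, hfix⟩ := exists_fixed' σ hcomm hnil Finset.univ ⊤
      (by
        obtain ⟨w, hw⟩ := exists_ne (0 : V)
        exact Submodule.ne_bot_iff _ |>.mpr ⟨w, Submodule.mem_top, hw⟩)
      (fun a v _ => Submodule.mem_top)
    apply hv0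
    have : v ∈ C := (hmemC v).mpr (fun a => hfix a (Finset.mem_univ a))
    rwa [hCbot, Submodule.mem_bot] at this
  have hchar : ringChar k ≠ 2 := by
    intro hrc
    apply h2
    have : ((2:ℕ):k) = 0 := (ringChar.spec k 2).mpr (by rw [hrc])
    simpa using this
  refine ⟨hchar, ?_⟩
  have hC' : ∀ v ∈ (⊤ : Submodule k V), (∀ a : ↥N, σ a v = v) → v = 0 := by
    intro v _ hfix
    have : v ∈ C := (hmemC v).mpr hfix
    rwa [hCbot, Submodule.mem_bot] at this
  have hmain := lemM σ h2 hsqN (finrank k (⊤ : Submodule k V)) ⊤ le_rfl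
    (fun a v _ => Submodule.mem_top) hC'
  have htopK : ∀ a : ↥N, finrank k ↥((⊤ : Submodule k V) ⊓ LinearMap.ker (σ a - 1))
      = finrank k ↥(LinearMap.ker (σ a - 1)) := fun a => by rw [top_inf_eq]
  simp only [htopK, finrank_top] at hmain
  -- split off the identity
  have hone : finrank k ↥(LinearMap.ker (σ (1 : ↥N) - 1)) = finrank k V := by
    rw [show σ (1 : ↥N) = 1 from map_one σ, sub_self, LinearMap.ker_zero, finrank_top]
  have hsum : finrank k V + ∑ a ∈ Finset.univ.erase (1 : ↥N),
      finrank k ↥(LinearMap.ker (σ a - 1)) = ∑ a : ↥N, finrank k ↥(LinearMap.ker (σ a - 1)) := by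
    rw [← hone]
    exact Finset.add_sum_erase Finset.univ
      (fun a : ↥N => finrank k ↥(LinearMap.ker (σ a - 1))) (Finset.mem_univ (1 : ↥N))
  haveI : Nontrivial ↥N := by
    rcases N.bot_or_nontrivial with h | h
    · exact absurd h hNbot
    · exact h
  have hcard2 : 2 ≤ Fintype.card ↥N := Fintype.one_lt_card
  have hdV : 0 < finrank k V := finrank_pos
  by_contra hcon
  push_neg at hcon
  have hbound : ∀ a ∈ Finset.univ.erase (1 : ↥N),
      finrank k V ≤ 2 * finrank k ↥(LinearMap.ker (σ a - 1)) := by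
    intro a ha
    have ha1 : a ≠ 1 := (Finset.mem_erase.mp ha).1
    have hga : (a : G) ≠ 1 := by
      intro e; exact ha1 (Subtype.ext e)
    have hord : orderOf (a : G) = 2 :=
      orderOf_eq_prime (by rw [pow_two]; exact helem _ a.2) hga
    exact hcon (a : G) a.2 hord
  have hS : (Finset.univ.erase (1 : ↥N)).card * finrank k V
      ≤ ∑ a ∈ Finset.univ.erase (1 : ↥N), 2 * finrank k ↥(LinearMap.ker (σ a - 1)) := by
    calc (Finset.univ.erase (1 : ↥N)).card * finrank k V
        = ∑ _a ∈ Finset.univ.erase (1 : ↥N), finrank k V := by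
          rw [Finset.sum_const, smul_eq_mul]
      _ ≤ _ := Finset.sum_le_sum hbound
  rw [← Finset.mul_sum] at hS
  have hcard_erase : (Finset.univ.erase (1 : ↥N)).card = Fintype.card ↥N - 1 := by
    rw [Finset.card_erase_of_mem (Finset.mem_univ 1), Finset.card_univ]
  obtain ⟨e, he⟩ : ∃ e, Fintype.card ↥N = e + 2 := ⟨Fintype.card ↥N - 2, by omega⟩
  rw [hcard_erase, he] at hS
  set S' := ∑ a ∈ Finset.univ.erase (1 : ↥N), finrank k ↥(LinearMap.ker (σ a - 1)) with hS'_def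
  have hS2 : (e + 1) * finrank k V ≤ 2 * S' := by
    have h21 : e + 2 - 1 = e + 1 := by omega
    rwa [h21] at hS
  have hmain2 : 2 * (finrank k V + S') = (e + 2) * finrank k V := by
    rw [hsum, hmain, he]
  have hexp1 : (e + 2) * finrank k V = e * finrank k V + 2 * finrank k V := by ring
  have hexp2 : (e + 1) * finrank k V = e * finrank k V + finrank k V := by ring
  rw [hexp1] at hmain2
  rw [hexp2] at hS2
  set m := e * finrank k V with hm_def
  omega
end
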